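/- arXiv:1603.04190 — 3 statements merged into one kernel-verified Lean document; each statement's English description precedes it below -/
import Mathlib

section
/- Define V_n(c) for c ∈ [0,1] by V_0(c) = 0 and V_n(c) = min over ŷ ∈ ℝ of max over y ∈ [c,1] of ((y - ŷ)^2 + V_{n-1}(y)). Then V_n(c) = α_n (1-c)^2, where α_1 = 1/4 and α_n = ((α_{n-1}+1)/2)^2. -/
lemma aux_minimax (a c : ℝ) (ha0 : 0 ≤ a) (ha1 : a ≤ 1) (hc0 : 0 ≤ c) (hc1 : c ≤ 1) :
    (⨅ yhat : ℝ, sSup ((fun y => (y - yhat) ^ 2 + a * (1 - y) ^ 2) '' Set.Icc c 1))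
      = ((a + 1) / 2) ^ 2 * (1 - c) ^ 2 := by
  have hcm : c ∈ Set.Icc c 1 := ⟨le_refl c, hc1⟩
  have h1m : (1:ℝ) ∈ Set.Icc c 1 := ⟨hc1, le_refl 1⟩
  have hbdd : ∀ w : ℝ, BddAbove ((fun y => (y - w) ^ 2 + a * (1 - y) ^ 2) '' Set.Icc c 1) := by
    intro w
    refine ⟨1 + 2 * |w| + w ^ 2 + a, ?_⟩
    rintro z ⟨y, hy, rfl⟩
    have hy0 : 0 ≤ y := le_trans hc0 hy.1
    have hy1 : y ≤ 1 := hy.2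
    show (y - w) ^ 2 + a * (1 - y) ^ 2 ≤ 1 + 2 * |w| + w ^ 2 + a
    nlinarith [le_abs_self w, neg_abs_le w,
      mul_nonneg hy0 (sub_nonneg.2 (le_abs_self w)),
      mul_nonneg hy0 (by linarith [neg_abs_le w] : (0:ℝ) ≤ w + |w|),
      mul_nonneg (by linarith : (0:ℝ) ≤ 1 - y) (abs_nonneg w),
      mul_nonneg ha0 (mul_nonneg hy0 (by linarith : (0:ℝ) ≤ 2 - y)),
      mul_nonneg hy0 (by linarith : (0:ℝ) ≤ 1 - y)]
  have hne : ∀ w : ℝ, ((fun y => (y - w) ^ 2 + a * (1 - y) ^ 2) '' Set.Icc c 1).Nonempty :=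
    fun w => ⟨_, Set.mem_image_of_mem _ hcm⟩
  have hbelow : BddBelow (Set.range fun w : ℝ =>
      sSup ((fun y => (y - w) ^ 2 + a * (1 - y) ^ 2) '' Set.Icc c 1)) := by
    refine ⟨0, ?_⟩
    rintro x ⟨w, rfl⟩
    refine le_trans ?_ (le_csSup (hbdd w) (Set.mem_image_of_mem _ hcm))
    positivity
  apply le_antisymm
  · apply ciInf_le_of_le hbelow ((c + 1) / 2 + a * (c - 1) / 2)
    apply csSup_le (hne _)
    rintro z ⟨y, hy, rfl⟩
    nlinarith [mul_nonneg (mul_nonneg (sub_nonneg.2 hy.1) (sub_nonneg.2 hy.2))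
      (by linarith : (0:ℝ) ≤ 1 + a)]
  · apply le_ciInf
    intro w
    rcases le_total w ((c + 1) / 2 + a * (c - 1) / 2) with h | h
    · refine le_trans ?_ (le_csSup (hbdd w) (Set.mem_image_of_mem _ h1m))
      show ((a + 1) / 2) ^ 2 * (1 - c) ^ 2 ≤ ((1:ℝ) - w) ^ 2 + a * (1 - 1) ^ 2
      have h2 : (1 + a) * (1 - c) / 2 ≤ 1 - w := by nlinarith
      have h3 : (0:ℝ) ≤ (1 + a) * (1 - c) / 2 := by
        have := mul_nonneg (by linarith : (0:ℝ) ≤ 1 + a) (by linarith : (0:ℝ) ≤ 1 - c)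
        linarith
      nlinarith [pow_le_pow_left₀ h3 h2 2]
    · refine le_trans ?_ (le_csSup (hbdd w) (Set.mem_image_of_mem _ hcm))
      show ((a + 1) / 2) ^ 2 * (1 - c) ^ 2 ≤ (c - w) ^ 2 + a * (1 - c) ^ 2
      have h2 : (1 - a) * (1 - c) / 2 ≤ w - c := by nlinarith
      have h3 : (0:ℝ) ≤ (1 - a) * (1 - c) / 2 := by
        have := mul_nonneg (by linarith : (0:ℝ) ≤ 1 - a) (by linarith : (0:ℝ) ≤ 1 - c)
        linarith
      nlinarith [pow_le_pow_left₀ h3 h2 2, mul_nonneg ha0 (sq_nonneg (1 - c))]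

/-- The value-to-go recursion of the noise-free minimax game played in isotonic
order satisfies `Vₙ(c) = αₙ (1-c)²` for `c ∈ [0,1]`. -/
theorem value_to_go_closed_form (V : ℕ → ℝ → ℝ) (α : ℕ → ℝ)
    (hV0 : ∀ c ∈ Set.Icc (0 : ℝ) 1, V 0 c = 0)
    (hVrec : ∀ n, ∀ c ∈ Set.Icc (0 : ℝ) 1,
      V (n + 1) c = ⨅ yhat : ℝ,
        sSup ((fun y => (y - yhat) ^ 2 + V n y) '' Set.Icc c 1))
    (hα0 : α 0 = 0)
    (hα1 : α 1 = 1 / 4)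
    (hαrec : ∀ n, 2 ≤ n → α n = ((α (n - 1) + 1) / 2) ^ 2) :
    ∀ n, ∀ c ∈ Set.Icc (0 : ℝ) 1, V n c = α n * (1 - c) ^ 2 := by
  have hrec' : ∀ n, α (n + 1) = ((α n + 1) / 2) ^ 2 := by
    intro n
    cases n with
    | zero => rw [hα1, hα0]; norm_num
    | succ m => simpa using hαrec (m + 2) (by omega)
  have hbounds : ∀ n, 0 ≤ α n ∧ α n ≤ 1 := by
    intro n
    induction n with
    | zero => simp [hα0]
    | succ m ih =>
      rw [hrec' m]
      constructor
      · positivity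
      · nlinarith [ih.1, ih.2]
  intro n
  induction n with
  | zero => intro c hc; rw [hV0 c hc, hα0]; ring
  | succ m ih =>
    intro c hc
    rw [hVrec m c hc]
    have himg : ∀ w : ℝ,
        sSup ((fun y => (y - w) ^ 2 + V m y) '' Set.Icc c 1)
          = sSup ((fun y => (y - w) ^ 2 + α m * (1 - y) ^ 2) '' Set.Icc c 1) := by
      intro w
      congr 1
      apply Set.image_congr
      intro y hy
      rw [ih y ⟨le_trans hc.1 hy.1, hy.2⟩]
    rw [iInf_congr himg, aux_minimax (α m) c (hbounds m).1 (hbounds m).2 hc.1 hc.2,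
      hrec' m]
end

section
/- For all y ∈ [0,1], log₂(1 + 2^{4y}) ≥ (1+y)^2. -/
open Real

-- lower bound on exp v + exp (-v) for v ∈ [0,1]
lemma cosh_lb {v : ℝ} (h0 : 0 ≤ v) (h1 : v ≤ 1) :
    2 + v^2 + v^4/13 ≤ Real.exp v + Real.exp (-v) := by
  have hav : |v| = v := abs_of_nonneg h0
  have hb1 := Real.exp_bound (x := v) (by rw [hav]; exact h1) (n := 6) (by norm_num)
  have hb2 := Real.exp_bound (x := -v) (by rw [abs_neg, hav]; exact h1) (n := 6) (by norm_num)
  simp only [Finset.sum_range_succ, Finset.sum_range_zero] at hb1 hb2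
  rw [abs_neg] at hb2
  rw [hav] at hb1 hb2
  norm_num [Nat.factorial] at hb1 hb2
  have h1' := (abs_le.1 hb1).1
  have h2' := (abs_le.1 hb2).1
  ring_nf at h1' h2'
  nlinarith [pow_le_pow_left₀ h0 h1 6, sq_nonneg v, pow_nonneg h0 6, pow_nonneg h0 4]

lemma exp_chord {a b θ : ℝ} (h0 : 0 ≤ θ) (h1 : θ ≤ 1) :
    Real.exp ((1-θ)*a + θ*b) ≤ (1-θ) * Real.exp a + θ * Real.exp b := by
  have := convexOn_exp.2 (Set.mem_univ a) (Set.mem_univ b) (sub_nonneg.2 h1) h0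
    (by ring : (1-θ) + θ = 1)
  simpa using this

set_option maxHeartbeats 1000000 in
lemma core (y : ℝ) (hy0 : 0 ≤ y) (hy1 : y ≤ 1) :
    Real.exp (Real.log 2 * (1+y)^2) ≤ 1 + Real.exp (Real.log 2 * (4*y)) := by
  obtain ⟨c, hc⟩ : ∃ c, Real.log 2 = c := ⟨_, rfl⟩
  rw [hc]
  have hcl : 0.6931471803 < c := hc ▸ Real.log_two_gt_d9
  have hcu : c < 0.6931471808 := hc ▸ Real.log_two_lt_d9
  have hec : Real.exp c = 2 := hc ▸ Real.exp_log (by norm_num)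
  have hc0 : (0:ℝ) < c := by linarith
  have hv0 : 0 ≤ c * y := mul_nonneg hc0.le hy0
  have hv1 : c * y ≤ 1 := by nlinarith
  obtain ⟨E, hE⟩ : ∃ E, Real.exp (c*y) = E := ⟨_, rfl⟩
  obtain ⟨s, hs⟩ : ∃ s, Real.exp (c/2) = s := ⟨_, rfl⟩
  obtain ⟨F, hFdef⟩ : ∃ F, Real.exp (c*y^2) = F := ⟨_, rfl⟩
  have hEpos : 0 < E := hE ▸ Real.exp_pos _
  have hS : 2 + (c*y)^2 + (c*y)^4/13 ≤ E + E⁻¹ := by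
    have := cosh_lb hv0 hv1
    rwa [Real.exp_neg, hE] at this
  have hs0 : 0 < s := hs ▸ Real.exp_pos _
  have hs2 : s^2 = 2 := by
    rw [← hs, sq, ← Real.exp_add, show c/2 + c/2 = c by ring, hec]
  have hs_ub : s < 1.41422 := by nlinarith
  have hs_lb : 1.41421 < s := by nlinarith
  have hc2l : 0.4804 < c^2 := by nlinarith
  have hc4l : 0.23 < c^4 := by nlinarith
  have hysq1 : y^2 ≤ 1 := by nlinarith
  have hid1 : Real.exp (c*(4*y)) = E^4 := by
    rw [show c*(4*y) = c*y + (c*y + (c*y + c*y)) by ring]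
    simp only [Real.exp_add, hE]
    ring
  have hid2 : Real.exp (c*(1+y)^2) = 2 * E^2 * F := by
    rw [show c*(1+y)^2 = c + (c*y + (c*y + c*y^2)) by ring]
    simp only [Real.exp_add, hE, hec, hFdef]
    ring
  rw [hid1, hid2]
  have hsplit : 1 + E^4 = E^2 * ((E+E⁻¹)^2 - 2) := by
    field_simp
    ring
  have hquad : 2 + 4*(c*y)^2 + (17/13)*(c*y)^4 ≤ (E+E⁻¹)^2 - 2 := by
    have h2' : (0:ℝ) ≤ 2 + (c*y)^2 + (c*y)^4/13 := by positivity
    have hSsq : (2 + (c*y)^2 + (c*y)^4/13)^2 ≤ (E+E⁻¹)^2 := by nlinarith [hS]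
    nlinarith [hSsq, sq_nonneg (c*y), sq_nonneg ((c*y)^2), pow_nonneg hv0 6, pow_nonneg hv0 8]
  have hF : 2 * F ≤ 2 + 4*(c*y)^2 + (17/13)*(c*y)^4 := by
    have hv2 : (c*y)^2 = c^2 * y^2 := by ring
    have hv4 : (c*y)^4 = c^4 * (y^2)^2 := by ring
    rw [hv2, hv4]
    rcases le_or_gt (y^2) (1/2) with hhalf | hhalf
    · have hch := exp_chord (a := 0) (b := c/2) (θ := 2*y^2)
        (by positivity) (by linarith)
      rw [show (1-2*y^2)*0 + (2*y^2)*(c/2) = c*y^2 by ring, Real.exp_zero, hs, hFdef] at hch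
      nlinarith [hch, mul_le_mul_of_nonneg_right hc2l.le (sq_nonneg y),
        mul_le_mul_of_nonneg_left hs_ub.le (sq_nonneg y),
        mul_nonneg (mul_nonneg (pow_nonneg hc0.le 4) (sq_nonneg y)) (sq_nonneg y)]
    · have hch := exp_chord (a := c/2) (b := c) (θ := 2*y^2 - 1)
        (by linarith) (by nlinarith)
      rw [show (1-(2*y^2-1))*(c/2) + (2*y^2-1)*c = c*y^2 by ring, hs, hec, hFdef] at hch
      nlinarith [hch, sq_nonneg (y^2 - 0.7), hhalf.le, sq_nonneg y,
        mul_le_mul_of_nonneg_left hs_ub.le (by linarith : (0:ℝ) ≤ 4 - 4*y^2),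
        mul_le_mul_of_nonneg_right hc2l.le (sq_nonneg y),
        mul_le_mul_of_nonneg_right hc4l.le (sq_nonneg (y^2))]
  have hmain : E^2 * (2*F) ≤ E^2 * ((E+E⁻¹)^2 - 2) :=
    mul_le_mul_of_nonneg_left (hF.trans hquad) (sq_nonneg E)
  nlinarith [hmain, hsplit]

/-- For all `y ∈ [0,1]`, `log₂(1 + 2^{4y}) ≥ (1+y)²`. -/
theorem logb_key_inequality :
    ∀ y ∈ Set.Icc (0 : ℝ) 1, Real.logb 2 (1 + 2 ^ (4 * y)) ≥ (1 + y) ^ 2 := by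
  intro y hy
  obtain ⟨hy0, hy1⟩ := hy
  have hpos : (0:ℝ) < 1 + 2 ^ (4*y) := by positivity
  rw [ge_iff_le, Real.le_logb_iff_rpow_le (by norm_num) hpos]
  rw [Real.rpow_def_of_pos (by norm_num), Real.rpow_def_of_pos (by norm_num)]
  exact core y hy0 hy1
end

section
/- Define β_0 = 0 and for n ≥ 0, β_{n+1} = max over k ∈ {0,...,n} of β_{n,k}, where β_{n,k} = β_k if β_k - β_{n-k} > 1, β_{n,k} = β_{n-k} if β_k - β_{n-k} < -1, and β_{n,k} = (1/4)(β_k - β_{n-k})^2 + (1/2)(β_k + β_{n-k}) + 1/4 otherwise. Then β_n ≤ (1/4) log₂(n+1) for all n ≥ 0. -/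
open Real Finset

private lemma exp_cubic_le {s : ℝ} (h0 : 0 ≤ s) (h1 : s ≤ 1) :
    Real.exp s ≤ 1 + s + s ^ 2 / 2 + (2 / 9) * s ^ 3 := by
  have h := Real.exp_bound' h0 h1 (n := 3) (by norm_num)
  have hsum : (∑ m ∈ Finset.range 3, s ^ m / m.factorial) = 1 + s + s ^ 2 / 2 := by
    simp [Finset.sum_range_succ, Nat.factorial]
    try ring
  rw [hsum] at h
  calc Real.exp s ≤ 1 + s + s ^ 2 / 2 + s ^ 3 * (3 + 1) / (Nat.factorial 3 * 3) := h
    _ = 1 + s + s ^ 2 / 2 + (2 / 9) * s ^ 3 := by norm_num [Nat.factorial]; ring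

private lemma sinh_cubic_ge {σ : ℝ} (h0 : 0 ≤ σ) :
    2 * σ + σ ^ 3 / 6 ≤ Real.exp σ - Real.exp (-σ) := by
  have h1 : 1 + σ + σ ^ 2 / 2 + σ ^ 3 / 6 ≤ Real.exp σ := by
    have h := Real.sum_le_exp_of_nonneg h0 4
    calc 1 + σ + σ ^ 2 / 2 + σ ^ 3 / 6
        = ∑ i ∈ Finset.range 4, σ ^ i / i.factorial := by
          simp [Finset.sum_range_succ, Nat.factorial]; try ring
      _ ≤ Real.exp σ := h
  have hp : 1 + σ + σ ^ 2 / 2 ≤ Real.exp σ := by nlinarith [pow_nonneg h0 3]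
  have h2 : Real.exp (-σ) ≤ 1 - σ + σ ^ 2 / 2 := by
    have hmul : Real.exp (-σ) * Real.exp σ = 1 := by
      rw [← Real.exp_add]; simp
    have h4 : (1:ℝ) ≤ (1 - σ + σ ^ 2 / 2) * (1 + σ + σ ^ 2 / 2) := by
      nlinarith [pow_nonneg h0 4]
    have key := mul_le_mul_of_nonneg_left hp (Real.exp_pos (-σ)).le
    nlinarith [key, hmul, h4, Real.exp_pos (-σ)]
  linarith

private lemma c_bracket : 0 ≤ 3 * (Real.log 2) ^ 2 - 2 * Real.log 2
    - (4 / 9) * (Real.log 2) ^ 3 + (2 / 3) * (Real.log 2) ^ 4 + (Real.log 2) ^ 6 / 36 := by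
  have hc1 : (0.6931 : ℝ) < Real.log 2 := by linarith [Real.log_two_gt_d9]
  have hc2 : Real.log 2 < 0.6932 := by linarith [Real.log_two_lt_d9]
  set c := Real.log 2 with hc
  have hc0 : (0:ℝ) ≤ c := by linarith
  have h2 : (0.6931:ℝ) ^ 2 ≤ c ^ 2 := pow_le_pow_left₀ (by norm_num) hc1.le 2
  have h4 : (0.6931:ℝ) ^ 4 ≤ c ^ 4 := pow_le_pow_left₀ (by norm_num) hc1.le 4
  have h3 : c ^ 3 ≤ (0.6932:ℝ) ^ 3 := pow_le_pow_left₀ hc0 hc2.le 3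
  have h6 : (0:ℝ) ≤ c ^ 6 := by positivity
  nlinarith [h2, h4, h3, h6]

set_option maxHeartbeats 1000000 in
private lemma core_exp {x : ℝ} (hx0 : 0 ≤ x) (hx1 : x ≤ 1) :
    2 * Real.exp (Real.log 2 * x ^ 2) ≤
      Real.exp (Real.log 2 * (2 * x)) + Real.exp (-(Real.log 2 * (2 * x))) := by
  have hc1 : (0.6931 : ℝ) < Real.log 2 := by linarith [Real.log_two_gt_d9]
  have hc2 : Real.log 2 < 0.6932 := by linarith [Real.log_two_lt_d9]
  set c := Real.log 2 with hc
  have hy0 : 0 ≤ x ^ 2 := sq_nonneg x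
  have hy1 : x ^ 2 ≤ 1 := by nlinarith
  have hs0 : 0 ≤ c * x ^ 2 := by positivity
  have hs1 : c * x ^ 2 ≤ 1 := by nlinarith
  have hA := exp_cubic_le hs0 hs1
  have hσ0 : 0 ≤ c * x := by positivity
  have hD := sinh_cubic_ge hσ0
  have hsq : Real.exp (c * (2 * x)) + Real.exp (-(c * (2 * x)))
      = (Real.exp (c * x) - Real.exp (-(c * x))) ^ 2 + 2 := by
    have e1 : Real.exp (c * (2 * x)) = Real.exp (c * x) * Real.exp (c * x) := by
      rw [← Real.exp_add]; ring_nf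
    have e2 : Real.exp (-(c * (2 * x))) = Real.exp (-(c * x)) * Real.exp (-(c * x)) := by
      rw [← Real.exp_add]; ring_nf
    have e3 : Real.exp (c * x) * Real.exp (-(c * x)) = 1 := by
      rw [← Real.exp_add]; simp
    rw [e1, e2]; nlinarith [e3]
  rw [hsq]
  have hDsq : (2 * (c * x) + (c * x) ^ 3 / 6) ^ 2
      ≤ (Real.exp (c * x) - Real.exp (-(c * x))) ^ 2 := by
    have hD0 : 0 ≤ 2 * (c * x) + (c * x) ^ 3 / 6 := by positivity
    nlinarith [hD, hD0]
  -- Reduce to polynomial inequality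
  have hpoly : 2 * (1 + c * x ^ 2 + (c * x ^ 2) ^ 2 / 2 + (2 / 9) * (c * x ^ 2) ^ 3)
      ≤ (2 * (c * x) + (c * x) ^ 3 / 6) ^ 2 + 2 := by
    set y := x ^ 2 with hy
    have hx2 : (c * x) ^ 2 = c ^ 2 * y := by rw [hy]; ring
    -- target: (4c²-2c) y + ((2/3)c⁴ - c²) y² + ((1/36)c⁶ - (4/9)c³) y³ ≥ 0
    have hbr := c_bracket
    have hy2 : y ^ 2 ≤ y := by
      have h := mul_le_of_le_one_right hy0 hy1
      nlinarith [h]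
    have hy3 : y ^ 3 ≤ y := by
      have h := mul_le_of_le_one_right (mul_nonneg hy0 hy0) hy1
      nlinarith [h, hy2]
    have hcl : c ≤ 1 := by linarith
    have hc0' : (0:ℝ) ≤ c := by linarith
    have hsq1 : c ^ 2 ≤ 1 := pow_le_one₀ hc0' hcl
    have hcube1 : c ^ 3 ≤ 1 := pow_le_one₀ hc0' hcl
    have h42 : c ^ 4 ≤ c ^ 2 := by
      have h := mul_nonneg (sq_nonneg c) (show (0:ℝ) ≤ 1 - c ^ 2 by linarith)
      nlinarith [h]
    have h63 : c ^ 6 ≤ c ^ 3 := by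
      have h := mul_nonneg (pow_nonneg hc0' 3) (show (0:ℝ) ≤ 1 - c ^ 3 by linarith)
      nlinarith [h]
    have hneg2 : (2 / 3) * c ^ 4 - c ^ 2 ≤ 0 := by linarith [h42, sq_nonneg c]
    have hneg3 : c ^ 6 / 36 - (4 / 9) * c ^ 3 ≤ 0 := by
      linarith [h63, pow_nonneg hc0' 3]
    have step2 : ((2 / 3) * c ^ 4 - c ^ 2) * y ≤ ((2 / 3) * c ^ 4 - c ^ 2) * y ^ 2 :=
      mul_le_mul_of_nonpos_left hy2 hneg2
    have step3 : (c ^ 6 / 36 - (4 / 9) * c ^ 3) * y ≤ (c ^ 6 / 36 - (4 / 9) * c ^ 3) * y ^ 3 :=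
      mul_le_mul_of_nonpos_left hy3 hneg3
    have hbry : 0 ≤ (3 * c ^ 2 - 2 * c - (4 / 9) * c ^ 3 + (2 / 3) * c ^ 4 + c ^ 6 / 36) * y :=
      mul_nonneg hbr hy0
    have expand : (2 * (c * x) + (c * x) ^ 3 / 6) ^ 2
        = 4 * c ^ 2 * y + (2 / 3) * c ^ 4 * y ^ 2 + c ^ 6 * y ^ 3 / 36 := by
      rw [hy]; ring
    rw [expand]
    linarith [step2, step3, hbry]
  calc 2 * Real.exp (c * x ^ 2)
      ≤ 2 * (1 + c * x ^ 2 + (c * x ^ 2) ^ 2 / 2 + (2 / 9) * (c * x ^ 2) ^ 3) := by linarith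
    _ ≤ (2 * (c * x) + (c * x) ^ 3 / 6) ^ 2 + 2 := hpoly
    _ ≤ (Real.exp (c * x) - Real.exp (-(c * x))) ^ 2 + 2 := by linarith [hDsq]

private lemma core_rpow {x : ℝ} (hx0 : 0 ≤ x) (hx1 : x ≤ 1) :
    (2:ℝ) ^ (x ^ 2 + 1) ≤ (2:ℝ) ^ (2 * x) + (2:ℝ) ^ (-(2 * x)) := by
  have h2 : (0:ℝ) < 2 := two_pos
  rw [Real.rpow_def_of_pos h2, Real.rpow_def_of_pos h2, Real.rpow_def_of_pos h2]
  have e1 : Real.log 2 * (x ^ 2 + 1) = Real.log 2 * x ^ 2 + Real.log 2 := by ring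
  have e2 : Real.log 2 * -(2 * x) = -(Real.log 2 * (2 * x)) := by ring
  rw [e1, e2, Real.exp_add, Real.exp_log h2]
  linarith [core_exp hx0 hx1]

private lemma key_d {d : ℝ} (hd : |d| ≤ 1) :
    d ^ 2 + 1 ≤ Real.logb 2 ((2:ℝ) ^ (2 * d) + (2:ℝ) ^ (-(2 * d))) := by
  have h : (2:ℝ) ^ (d ^ 2 + 1) ≤ (2:ℝ) ^ (2 * d) + (2:ℝ) ^ (-(2 * d)) := by
    rcases le_or_gt 0 d with h0 | h0
    · exact core_rpow h0 (abs_le.mp hd).2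
    · have h' := core_rpow (x := -d) (by linarith) (by linarith [(abs_le.mp hd).1])
      have e1 : (-d) ^ 2 + 1 = d ^ 2 + 1 := by ring
      have e2 : 2 * (-d) = -(2 * d) := by ring
      rw [e1, e2, neg_neg] at h'
      linarith
  calc d ^ 2 + 1 = Real.logb 2 ((2:ℝ) ^ (d ^ 2 + 1)) :=
        (Real.logb_rpow (by norm_num) (by norm_num)).symm
    _ ≤ _ := Real.logb_le_logb_of_le one_lt_two (Real.rpow_pos_of_pos two_pos _) h

private lemma key (a b : ℝ) (h : |a - b| ≤ 1) :
    1 / 4 * (a - b) ^ 2 + 1 / 2 * (a + b) + 1 / 4 ≤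
      1 / 4 * Real.logb 2 ((2:ℝ) ^ (4 * a) + (2:ℝ) ^ (4 * b)) := by
  have hsplit : (2:ℝ) ^ (4 * a) + (2:ℝ) ^ (4 * b)
      = (2:ℝ) ^ (2 * (a + b)) * ((2:ℝ) ^ (2 * (a - b)) + (2:ℝ) ^ (-(2 * (a - b)))) := by
    have e1 : (4:ℝ) * a = 2 * (a + b) + 2 * (a - b) := by ring
    have e2 : (4:ℝ) * b = 2 * (a + b) + -(2 * (a - b)) := by ring
    rw [e1, e2, Real.rpow_add two_pos, Real.rpow_add two_pos, ← mul_add]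
  rw [hsplit, Real.logb_mul (ne_of_gt (Real.rpow_pos_of_pos two_pos _))
      (ne_of_gt (by positivity)), Real.logb_rpow (by norm_num) (by norm_num)]
  linarith [key_d h]

/-- The recursion `β₀ = 0`, `β_{n+1} = max_{0 ≤ k ≤ n} β_{n,k}` (with `β_{n,k}`
given piecewise) satisfies `βₙ ≤ (1/4) log₂(n+1)`. -/
theorem beta_log_bound (β : ℕ → ℝ) (B : ℕ → ℕ → ℝ)
    (h0 : β 0 = 0)
    (hB : ∀ n k, k ≤ n → B n k =
      if β k - β (n - k) > 1 then β k
      else if β k - β (n - k) < -1 then β (n - k)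
      else (1 / 4) * (β k - β (n - k)) ^ 2 + (1 / 2) * (β k + β (n - k)) + 1 / 4)
    (hrec : ∀ n, β (n + 1) =
      (Finset.range (n + 1)).sup' (Finset.nonempty_range_iff.mpr (Nat.succ_ne_zero n))
        (fun k => B n k)) :
    ∀ n, β n ≤ (1 / 4) * Real.logb 2 (n + 1) := by
  intro n
  induction n using Nat.strong_induction_on with
  | _ n ih =>
    match n with
    | 0 => simp [h0]
    | (m + 1) =>
      have htarget : ((m + 1 : ℕ) : ℝ) + 1 = (m : ℝ) + 2 := by push_cast; ring
      rw [hrec m, htarget]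
      apply Finset.sup'_le
      intro k hk
      have hkm : k ≤ m := Nat.lt_succ_iff.mp (Finset.mem_range.mp hk)
      have ihk := ih k (Nat.lt_succ_of_le hkm)
      have ihmk := ih (m - k) (Nat.lt_succ_of_le (Nat.sub_le m k))
      have hcsub : ((m - k : ℕ) : ℝ) = (m : ℝ) - (k : ℝ) := by
        exact Nat.cast_sub hkm
      have hk1 : (0:ℝ) < (k : ℝ) + 1 := by positivity
      have hmk1 : (0:ℝ) < ((m - k : ℕ) : ℝ) + 1 := by positivity
      have hm2 : (0:ℝ) < (m : ℝ) + 2 := by positivity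
      have hmono1 : (1:ℝ) / 4 * Real.logb 2 ((k : ℝ) + 1)
          ≤ 1 / 4 * Real.logb 2 ((m : ℝ) + 2) := by
        have : (k : ℝ) + 1 ≤ (m : ℝ) + 2 := by
          have : (k : ℝ) ≤ (m : ℝ) := by exact_mod_cast hkm
          linarith
        have := Real.logb_le_logb_of_le one_lt_two hk1 this
        linarith
      have hmono2 : (1:ℝ) / 4 * Real.logb 2 (((m - k : ℕ) : ℝ) + 1)
          ≤ 1 / 4 * Real.logb 2 ((m : ℝ) + 2) := by
        have hle : ((m - k : ℕ) : ℝ) + 1 ≤ (m : ℝ) + 2 := by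
          rw [hcsub]
          have : (0:ℝ) ≤ (k : ℝ) := Nat.cast_nonneg k
          linarith
        have := Real.logb_le_logb_of_le one_lt_two hmk1 hle
        linarith
      rw [hB m k hkm]
      split_ifs with h1 h2
      · exact le_trans ihk hmono1
      · exact le_trans ihmk hmono2
      · have habs : |β k - β (m - k)| ≤ 1 := abs_le.mpr ⟨le_of_not_gt h2, le_of_not_gt h1⟩
        have hkey := key (β k) (β (m - k)) habs
        have e1 : (2:ℝ) ^ (4 * β k) ≤ (k : ℝ) + 1 := by
          have h4 : 4 * β k ≤ Real.logb 2 ((k : ℝ) + 1) := by linarith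
          calc (2:ℝ) ^ (4 * β k) ≤ (2:ℝ) ^ (Real.logb 2 ((k : ℝ) + 1)) :=
                (Real.rpow_le_rpow_left_iff one_lt_two).mpr h4
            _ = (k : ℝ) + 1 := Real.rpow_logb two_pos (by norm_num) hk1
        have e2 : (2:ℝ) ^ (4 * β (m - k)) ≤ ((m - k : ℕ) : ℝ) + 1 := by
          have h4 : 4 * β (m - k) ≤ Real.logb 2 (((m - k : ℕ) : ℝ) + 1) := by linarith
          calc (2:ℝ) ^ (4 * β (m - k)) ≤ (2:ℝ) ^ (Real.logb 2 (((m - k : ℕ) : ℝ) + 1)) :=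
                (Real.rpow_le_rpow_left_iff one_lt_two).mpr h4
            _ = ((m - k : ℕ) : ℝ) + 1 := Real.rpow_logb two_pos (by norm_num) hmk1
        have hsum : (2:ℝ) ^ (4 * β k) + (2:ℝ) ^ (4 * β (m - k)) ≤ (m : ℝ) + 2 := by
          rw [hcsub] at e2
          linarith
        have hmono3 : Real.logb 2 ((2:ℝ) ^ (4 * β k) + (2:ℝ) ^ (4 * β (m - k)))
            ≤ Real.logb 2 ((m : ℝ) + 2) :=
          Real.logb_le_logb_of_le one_lt_two (by positivity) hsum
        linarith
end
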